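/- arXiv:2006.08474 — 3 statements merged into one kernel-verified Lean document; each statement's English description precedes it below -/
import Mathlib

section
/- For every μ_P-integrable function φ : P → ℂ, every bounded Borel-measurable function f : M → ℂ, and every g ∈ P, one has ∫_P f(pr(g·g′))·φ(g′) dμ_P(g′) = ∫_M f(pr(g)·m′)·(λφ)(m′) dμ_M(m′). (This is the unfolding identity of Lemma 3.3: the natural injection I(f) = f ∘ pr intertwines the constant-term map λ with the action by integration, I(λ(φ)f) = φ·I(f).) -/
/-!
Parametrize `P` by `e(m, n) = σ(m)·n`. Since `pr (σ m · n) = m`, the function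
`g' ↦ f (pr (g·g'))` pulls back along `e` to a bounded function of `m` alone, so after
changing variables to `μ_M ⊗ μ_N` Fubini integrates out `n` first and produces `λφ`.
-/

open MeasureTheory

section Unfolding

variable {X Y P 𝕜 : Type*} [MeasurableSpace X] [MeasurableSpace Y] [MeasurableSpace P] [RCLike 𝕜]
  {μ : Measure X} {ν : Measure Y} [SFinite ν] [SFinite μ]

theorem integral_map_prod_bdd_mul_eq_integral_mul_integral {e : X × Y → P} (he : Measurable e)
    {F : P → 𝕜} (hF : Measurable F) {C : ℝ} (hFC : ∀ p, ‖F p‖ ≤ C) {f : X → 𝕜}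
    (hFe : ∀ x y, F (e (x, y)) = f x) {φ : P → 𝕜} (hφ : Integrable φ ((μ.prod ν).map e)) :
    ∫ p, F p * φ p ∂((μ.prod ν).map e) = ∫ x, f x * ∫ y, φ (e (x, y)) ∂ν ∂μ := by
  have hφe : Integrable (φ ∘ e) (μ.prod ν) :=
    (integrable_map_measure hφ.aestronglyMeasurable he.aemeasurable).mp hφ
  have hFφe : Integrable (fun z => F (e z) * φ (e z)) (μ.prod ν) :=
    hφe.bdd_mul (hF.comp he).aestronglyMeasurable (.of_forall fun z => hFC (e z))
  calc ∫ p, F p * φ p ∂((μ.prod ν).map e)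
      = ∫ z, F (e z) * φ (e z) ∂μ.prod ν :=
        integral_map he.aemeasurable (hF.aestronglyMeasurable.mul hφ.aestronglyMeasurable)
    _ = ∫ x, ∫ y, f x * φ (e (x, y)) ∂ν ∂μ := by
        rw [integral_prod _ hFφe]
        simp only [hFe]
    _ = ∫ x, f x * ∫ y, φ (e (x, y)) ∂ν ∂μ := by
        simp only [integral_const_mul]

end Unfolding

theorem constant_term_unfolding_general
    {P M N : Type*}
    [Group P] [TopologicalSpace P] [IsTopologicalGroup P]
    [MeasurableSpace P] [BorelSpace P]
    [Group M] [TopologicalSpace M]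
    [SecondCountableTopology M] [MeasurableSpace M] [BorelSpace M]
    [Group N] [TopologicalSpace N]
    [MeasurableSpace N] [BorelSpace N]
    (μM : Measure M) (μN : Measure N) (μP : Measure P)
    [SigmaFinite μM] [SigmaFinite μN]
    -- `pr : P → M` is a continuous surjective homomorphism:
    (pr : P →* M) (hprc : Continuous pr)
    -- `N` is identified with the kernel of `pr`, a closed subgroup of `P`:
    (ι : N →* P) (hιc : Continuous ι)
    (hker : ∀ p : P, pr p = 1 ↔ ∃ n : N, ι n = p)
    -- `σ : M → P` is a continuous section of `pr`:
    (σ : M → P) (hσc : Continuous σ) (hσsec : ∀ m, pr (σ m) = m)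
    -- `e(m,n) = σ(m)·n` is a bijection and `μ_P = e_*(μ_M ⊗ μ_N)`:
    (e : M × N → P) (he : ∀ m n, e (m, n) = σ m * ι n)
    (hμP : μP = Measure.map e (μM.prod μN))
    -- data of the identity:
    (φ : P → ℂ) (hφ : Integrable φ μP)
    (f : M → ℂ) (hf : Measurable f) (hfbd : ∃ C : ℝ, ∀ m, ‖f m‖ ≤ C)
    (g : P) :
    ∫ g' : P, f (pr (g * g')) * φ g' ∂μP
      = ∫ m' : M, f (pr g * m') * (∫ n : N, φ (σ m' * ι n) ∂μN) ∂μM := by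
  obtain ⟨C, hC⟩ := hfbd
  have hem : Measurable e := by
    rw [show e = fun z => σ z.1 * ι z.2 from funext fun z => he z.1 z.2]
    exact ((hσc.comp continuous_fst).mul (hιc.comp continuous_snd)).measurable
  have hpr_e (m : M) (n : N) : pr (g * e (m, n)) = pr g * m := by
    rw [he, map_mul, map_mul, hσsec, (hker (ι n)).mpr ⟨n, rfl⟩, mul_one]
  subst hμP
  simp only [← he]
  exact integral_map_prod_bdd_mul_eq_integral_mul_integral hem
    (hf.comp (hprc.measurable.comp (measurable_const_mul g))) (fun _ => hC _)
    (fun m n => congrArg f (hpr_e m n)) hφ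

theorem constant_term_unfolding
    {P M N : Type*}
    [Group P] [TopologicalSpace P] [IsTopologicalGroup P] [LocallyCompactSpace P]
    [SecondCountableTopology P] [T2Space P] [MeasurableSpace P] [BorelSpace P]
    [Group M] [TopologicalSpace M] [IsTopologicalGroup M] [LocallyCompactSpace M]
    [SecondCountableTopology M] [T2Space M] [MeasurableSpace M] [BorelSpace M]
    [Group N] [TopologicalSpace N] [IsTopologicalGroup N] [LocallyCompactSpace N]
    [SecondCountableTopology N] [T2Space N] [MeasurableSpace N] [BorelSpace N]
    (μM : Measure M) (μN : Measure N) (μP : Measure P)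
    [μM.IsHaarMeasure] [μN.IsHaarMeasure] [SigmaFinite μM] [SigmaFinite μN]
    -- `pr : P → M` is a continuous surjective homomorphism:
    (pr : P →* M) (hprc : Continuous pr) (hprs : Function.Surjective pr)
    -- `N` is identified with the kernel of `pr`, a closed subgroup of `P`:
    (ι : N →* P) (hιc : Continuous ι) (hιinj : Function.Injective ι)
    (hιcl : IsClosed (Set.range ι))
    (hker : ∀ p : P, pr p = 1 ↔ ∃ n : N, ι n = p)
    -- `σ : M → P` is a continuous section of `pr`:
    (σ : M → P) (hσc : Continuous σ) (hσsec : ∀ m, pr (σ m) = m)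
    -- `e(m,n) = σ(m)·n` is a bijection and `μ_P = e_*(μ_M ⊗ μ_N)`:
    (e : M × N → P) (he : ∀ m n, e (m, n) = σ m * ι n)
    (hbij : Function.Bijective e)
    (hμP : μP = Measure.map e (μM.prod μN))
    -- data of the identity:
    (φ : P → ℂ) (hφ : Integrable φ μP)
    (f : M → ℂ) (hf : Measurable f) (hfbd : ∃ C : ℝ, ∀ m, ‖f m‖ ≤ C)
    (g : P) :
    ∫ g' : P, f (pr (g * g')) * φ g' ∂μP
      = ∫ m' : M, f (pr g * m') * (∫ n : N, φ (σ m' * ι n) ∂μN) ∂μM :=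
  constant_term_unfolding_general μM μN μP pr hprc ι hιc hker σ hσc hσsec e he hμP φ hφ f hf hfbd g
end

section
/- For all compactly supported continuous functions φ, ψ : P → ℂ, the constant-term map is multiplicative for convolution: λ(φ ∗_P ψ) = (λφ) ∗_M (λψ) as functions on M, where (φ ∗_P ψ)(x) = ∫_P φ(g)·ψ(g⁻¹·x) dμ_P(g) for x ∈ P, and (u ∗_M v)(m) = ∫_M u(m′)·v(m′⁻¹·m) dμ_M(m′) for m ∈ M. (This is the paper's claim that the constant term λ : H^S(P) → H^S(M) is a morphism of algebras.) -/
open MeasureTheory Topology Pointwise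

/-!
Writing `μ_P` as the image of `μ_M ⊗ μ_N` under `e` and applying Fubini, the left side becomes
`∫_{M×N} φ(e z) ∫_N ψ(e(z)⁻¹ σ(m) n) dn dz`. Since `e(z)⁻¹ σ(m)` lies in the coset
`σ(z₁⁻¹ m) N`, left invariance of `μ_N` turns the inner integral into `(λψ)(z₁⁻¹ m)`, and a second
Fubini gives the right side. Fubini applies because all integrands have compact support: by the
open mapping theorem `N` is a closed embedded subgroup, which makes `e` a proper map.
-/

theorem MonoidHom.isClosedEmbedding_of_isClosed_range
    {N P : Type*} [Group N] [TopologicalSpace N] [IsTopologicalGroup N] [SigmaCompactSpace N]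
    [Group P] [TopologicalSpace P] [IsTopologicalGroup P] [LocallyCompactSpace P] [T2Space P]
    (ι : N →* P) (hc : Continuous ι) (hinj : Function.Injective ι)
    (hcl : IsClosed (Set.range ι)) : IsClosedEmbedding ι := by
  have : LocallyCompactSpace ι.range := hcl.locallyCompactSpace
  have hcont : Continuous ι.rangeRestrict := hc.subtype_mk _
  have hhomeo : IsHomeomorph ι.rangeRestrict :=
    ⟨hcont, ι.rangeRestrict.isOpenMap_of_sigmaCompact ι.rangeRestrict_surjective hcont,
      ι.rangeRestrict_injective_iff.mpr hinj, ι.rangeRestrict_surjective⟩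
  exact ⟨IsEmbedding.subtypeVal.comp hhomeo.isEmbedding, hcl⟩

theorem hasCompactSupport_mul_inv_mul {P E X Y : Type*} [Group P] [TopologicalSpace P]
    [IsTopologicalGroup P] [T2Space P] [TopologicalSpace X] [TopologicalSpace Y] [MulZeroClass E]
    {φ ψ : P → E} (hφ : HasCompactSupport φ) (hψ : HasCompactSupport ψ) {a : X → P} {b : Y → P}
    (ha : IsProperMap a) (hb : IsProperMap b) :
    HasCompactSupport fun p : X × Y => φ (b p.2) * ψ ((b p.2)⁻¹ * a p.1) := by
  have hproper : IsProperMap fun p : X × Y => (b p.2, (b p.2)⁻¹ * a p.1) :=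
    ((Homeomorph.shearMulRight P).symm.isProperMap.comp (Homeomorph.prodComm P P).isProperMap).comp
      (ha.prodMap hb)
  refine .intro' (hproper.isCompact_preimage (hφ.prod hψ))
    ((hφ.prod hψ).isClosed.preimage hproper.continuous) fun p hp => ?_
  rcases not_and_or.mp hp with h | h
  · rw [image_eq_zero_of_notMem_tsupport h, zero_mul]
  · rw [image_eq_zero_of_notMem_tsupport h, mul_zero]

section

variable {P M N : Type*} [Group P] [Group M] [Group N]

theorem integral_mul_eq_integral_section_mul [MeasurableSpace N] [MeasurableMul N] {E : Type*}
    [NormedAddCommGroup E] [NormedSpace ℝ E] (μN : Measure N) [μN.IsMulLeftInvariant]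
    (pr : P →* M) (ι : N →* P) (hker : ∀ p, pr p = 1 → ∃ n, ι n = p) (σ : M → P)
    (hσsec : ∀ m, pr (σ m) = m) (f : P → E) (a : P) :
    ∫ n, f (a * ι n) ∂μN = ∫ n, f (σ (pr a) * ι n) ∂μN := by
  obtain ⟨k, hk⟩ := hker ((σ (pr a))⁻¹ * a) (by simp [hσsec])
  have hshift : ∀ n, a * ι n = σ (pr a) * ι (k * n) := fun n => by
    rw [map_mul, hk, mul_assoc, mul_inv_cancel_left]
  simp_rw [hshift]
  exact integral_mul_left_eq_self (fun n => f (σ (pr a) * ι n)) k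

variable [TopologicalSpace P] [IsTopologicalGroup P] [LocallyCompactSpace P] [T2Space P]
  [TopologicalSpace M] [TopologicalSpace N]

theorem isProperMap_section_mul (pr : P →* M) (hpr : Continuous pr) (ι : N →* P)
    (hι : IsProperMap ι) (hprι : ∀ n, pr (ι n) = 1) (σ : M → P) (hσ : Continuous σ)
    (hσsec : ∀ m, pr (σ m) = m) :
    IsProperMap fun z : M × N => σ z.1 * ι z.2 := by
  have hcont : Continuous fun z : M × N => σ z.1 * ι z.2 :=
    (hσ.comp continuous_fst).mul (hι.continuous.comp continuous_snd)
  refine isProperMap_iff_isCompact_preimage.mpr ⟨hcont, fun K hK => ?_⟩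
  have hpK : IsCompact (pr '' K) := hK.image hpr
  refine (hpK.prod (hι.isCompact_preimage ((hpK.image hσ).inv.mul hK))).of_isClosed_subset
    (hK.isClosed.preimage hcont) fun z hz => ?_
  have hz₁ : z.1 ∈ pr '' K := ⟨_, hz, by simp [hprι, hσsec]⟩
  refine ⟨hz₁, ?_⟩
  rw [Set.mem_preimage, ← inv_mul_cancel_left (σ z.1) (ι z.2)]
  exact Set.mul_mem_mul (Set.inv_mem_inv.mpr ⟨z.1, hz₁, rfl⟩) hz

end

theorem constant_term_convolution_general
    {P M N : Type*}
    [Group P] [TopologicalSpace P] [IsTopologicalGroup P] [LocallyCompactSpace P]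
    [T2Space P] [MeasurableSpace P] [BorelSpace P]
    [Group M] [TopologicalSpace M] [MeasurableSpace M] [BorelSpace M]
    [Group N] [TopologicalSpace N] [IsTopologicalGroup N] [LocallyCompactSpace N]
    [SecondCountableTopology N] [MeasurableSpace N] [BorelSpace N]
    (μM : Measure M) (μN : Measure N) (μP : Measure P)
    [μM.IsHaarMeasure] [μN.IsHaarMeasure] [SigmaFinite μM]
    -- `pr : P → M` is a continuous surjective homomorphism:
    (pr : P →* M) (hprc : Continuous pr)
    -- `N` is identified with the kernel of `pr`, a closed subgroup of `P`:
    (ι : N →* P) (hιc : Continuous ι) (hιinj : Function.Injective ι)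
    (hιcl : IsClosed (Set.range ι))
    (hker : ∀ p : P, pr p = 1 ↔ ∃ n : N, ι n = p)
    -- `σ : M → P` is a continuous section of `pr`:
    (σ : M → P) (hσc : Continuous σ) (hσsec : ∀ m, pr (σ m) = m)
    -- `e(m,n) = σ(m)·n` is a bijection and `μ_P = e_*(μ_M ⊗ μ_N)`:
    (e : M × N → P) (he : ∀ m n, e (m, n) = σ m * ι n)
    (hμP : μP = Measure.map e (μM.prod μN))
    -- compactly supported continuous functions on `P`:
    (φ ψ : P → ℂ)
    (hφc : Continuous φ) (hφs : HasCompactSupport φ)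
    (hψc : Continuous ψ) (hψs : HasCompactSupport ψ) :
    -- `λ(φ ∗_P ψ) = (λφ) ∗_M (λψ)` as functions on `M`:
    ∀ m : M,
      (∫ n : N, (∫ g : P, φ g * ψ (g⁻¹ * (σ m * ι n)) ∂μP) ∂μN)
        = ∫ m' : M,
            (∫ n : N, φ (σ m' * ι n) ∂μN) * (∫ n : N, ψ (σ (m'⁻¹ * m) * ι n) ∂μN) ∂μM := by
  intro m
  have hι : IsClosedEmbedding ι := ι.isClosedEmbedding_of_isClosed_range hιc hιinj hιcl
  have hprι : ∀ n, pr (ι n) = 1 := fun n => (hker (ι n)).mpr ⟨n, rfl⟩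
  obtain rfl : e = fun z : M × N => σ z.1 * ι z.2 := funext fun z => he z.1 z.2
  have hproper := isProperMap_section_mul pr hprc ι hι.isProperMap hprι σ hσc hσsec
  subst hμP
  let G : N × (M × N) → ℂ :=
    fun p => φ (σ p.2.1 * ι p.2.2) * ψ ((σ p.2.1 * ι p.2.2)⁻¹ * (σ m * ι p.1))
  have hshift : IsProperMap fun n => σ m * ι n :=
    (Homeomorph.mulLeft (σ m)).isProperMap.comp hι.isProperMap
  have hGs := hasCompactSupport_mul_inv_mul (E := ℂ) hφs hψs hshift hproper
  have hG : Integrable G (μN.prod (μM.prod μN)) :=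
    Continuous.integrable_of_hasCompactSupport (by fun_prop) hGs
  have hfiber (z : M × N) :
      ∫ n, G (n, z) ∂μN = φ (σ z.1 * ι z.2) * ∫ n, ψ (σ (z.1⁻¹ * m) * ι n) ∂μN := by
    simp only [G, ← mul_assoc _ (σ m)]
    rw [integral_const_mul, integral_mul_eq_integral_section_mul μN pr ι (fun p => (hker p).mp)
      σ hσsec]
    simp [hprι, hσsec]
  calc
    _ = ∫ n, ∫ z, G (n, z) ∂(μM.prod μN) ∂μN := by
      refine integral_congr_ae (Filter.Eventually.of_forall fun n => ?_)
      exact integral_map hproper.continuous.aemeasurable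
        (by fun_prop : Continuous _).aestronglyMeasurable
    _ = ∫ z, ∫ n, G (n, z) ∂μN ∂(μM.prod μN) := integral_integral_swap hG
    _ = ∫ z : M × N, φ (σ z.1 * ι z.2) * ∫ n, ψ (σ (z.1⁻¹ * m) * ι n) ∂μN ∂(μM.prod μN) := by
      simp_rw [hfiber]
    _ = _ := integral_prod _ (hG.swap.integral_prod_left.congr (.of_forall hfiber))
    _ = _ := by simp_rw [integral_mul_const]

theorem constant_term_convolution
    {P M N : Type*}
    [Group P] [TopologicalSpace P] [IsTopologicalGroup P] [LocallyCompactSpace P]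
    [SecondCountableTopology P] [T2Space P] [MeasurableSpace P] [BorelSpace P]
    [Group M] [TopologicalSpace M] [IsTopologicalGroup M] [LocallyCompactSpace M]
    [SecondCountableTopology M] [T2Space M] [MeasurableSpace M] [BorelSpace M]
    [Group N] [TopologicalSpace N] [IsTopologicalGroup N] [LocallyCompactSpace N]
    [SecondCountableTopology N] [T2Space N] [MeasurableSpace N] [BorelSpace N]
    (μM : Measure M) (μN : Measure N) (μP : Measure P)
    [μM.IsHaarMeasure] [μN.IsHaarMeasure] [SigmaFinite μM] [SigmaFinite μN]
    -- `pr : P → M` is a continuous surjective homomorphism: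
    (pr : P →* M) (hprc : Continuous pr) (hprs : Function.Surjective pr)
    -- `N` is identified with the kernel of `pr`, a closed subgroup of `P`:
    (ι : N →* P) (hιc : Continuous ι) (hιinj : Function.Injective ι)
    (hιcl : IsClosed (Set.range ι))
    (hker : ∀ p : P, pr p = 1 ↔ ∃ n : N, ι n = p)
    -- `σ : M → P` is a continuous section of `pr`:
    (σ : M → P) (hσc : Continuous σ) (hσsec : ∀ m, pr (σ m) = m)
    -- `e(m,n) = σ(m)·n` is a bijection and `μ_P = e_*(μ_M ⊗ μ_N)`:
    (e : M × N → P) (he : ∀ m n, e (m, n) = σ m * ι n)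
    (hbij : Function.Bijective e)
    (hμP : μP = Measure.map e (μM.prod μN))
    -- compactly supported continuous functions on `P`:
    (φ ψ : P → ℂ)
    (hφc : Continuous φ) (hφs : HasCompactSupport φ)
    (hψc : Continuous ψ) (hψs : HasCompactSupport ψ) :
    -- `λ(φ ∗_P ψ) = (λφ) ∗_M (λψ)` as functions on `M`:
    ∀ m : M,
      (∫ n : N, (∫ g : P, φ g * ψ (g⁻¹ * (σ m * ι n)) ∂μP) ∂μN)
        = ∫ m' : M,
            (∫ n : N, φ (σ m' * ι n) ∂μN) * (∫ n : N, ψ (σ (m'⁻¹ * m) * ι n) ∂μN) ∂μM :=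
  constant_term_convolution_general μM μN μP pr hprc ι hιc hιinj hιcl hker σ hσc hσsec e he hμP φ ψ
    hφc hφs hψc hψs
end

section
/- For all compactly supported continuous K-bi-invariant functions φ, ψ : G → ℂ, the restriction of functions to P is multiplicative for convolution: for every x ∈ P, ∫_G φ(g)·ψ(g⁻¹·x) dμ_G(g) = ∫_P φ(p)·ψ(p⁻¹·x) dμ_P(p); that is, (φ ∗_G ψ)|_P = (φ|_P) ∗_P (ψ|_P). (This is the paper's claim that the restriction map ρ : H^S(G) → H^S(P) is a morphism of algebras, given the Iwasawa decomposition G = P·K.) -/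
/-!
Right `K`-invariance of `φ` and left `K`-invariance of `ψ` make the integrand
`g ↦ φ g * ψ (g⁻¹ * x)` right `K`-invariant. In the Iwasawa formula the inner integral over
`K` of a right `K`-invariant function is therefore the value at `p` times `μK K = 1`, so the
integral over `G` collapses to the integral over `P`.
-/

open MeasureTheory

theorem integral_eq_integral_subgroup_of_mul_right_invariant {G E : Type*} [Group G]
    [MeasurableSpace G] [NormedAddCommGroup E] [NormedSpace ℝ E] [CompleteSpace E]
    {μG : Measure G} {K P : Subgroup G} {μK : Measure K} [IsProbabilityMeasure μK]
    {μP : Measure P} {F : G → E}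
    (hIw : ∫ g, F g ∂μG = ∫ p : P, (∫ k : K, F ((p : G) * (k : G)) ∂μK) ∂μP)
    (hF : ∀ (g : G) (k : K), F (g * k) = F g) :
    ∫ g, F g ∂μG = ∫ p : P, F p ∂μP := by
  simp only [hIw, hF, integral_const, probReal_univ, one_smul]

theorem convolution_integrand_mul_right_eq {G R : Type*} [Group G] [Mul R] {K : Subgroup G}
    {φ ψ : G → R} (hφ : ∀ (g : G) (k : K), φ (g * k) = φ g)
    (hψ : ∀ (k : K) (g : G), ψ (k * g) = ψ g) (x g : G) (k : K) :
    φ (g * k) * ψ ((g * k)⁻¹ * x) = φ g * ψ (g⁻¹ * x) := by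
  rw [hφ, mul_inv_rev, mul_assoc, ← Subgroup.coe_inv, hψ]

theorem restriction_convolution_general
    {G : Type*} [Group G] [TopologicalSpace G] [IsTopologicalGroup G]
    [MeasurableSpace G]
    (μG : Measure G)
    -- `K` a compact open subgroup with Haar probability measure `μK`:
    (K : Subgroup G)
    (μK : Measure K) [IsProbabilityMeasure μK]
    -- `P` a closed subgroup with left Haar measure `μP`:
    (P : Subgroup G)
    (μP : Measure P)
    -- the Iwasawa integration formula `∫_G F = ∫_P ∫_K F(p·k)`:
    (hIw : ∀ F : G → ℂ, Continuous F → HasCompactSupport F →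
      ∫ g : G, F g ∂μG = ∫ p : P, (∫ k : K, F ((p : G) * (k : G)) ∂μK) ∂μP)
    -- compactly supported continuous `K`-bi-invariant functions:
    (φ ψ : G → ℂ)
    (hφc : Continuous φ) (hφs : HasCompactSupport φ)
    (hψc : Continuous ψ)
    (hφK : ∀ (k k' : K) (g : G), φ ((k : G) * g * (k' : G)) = φ g)
    (hψK : ∀ (k k' : K) (g : G), ψ ((k : G) * g * (k' : G)) = ψ g)
    -- the identity, for every `x ∈ P`:
    (x : P) :
    ∫ g : G, φ g * ψ (g⁻¹ * (x : G)) ∂μG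
      = ∫ p : P, φ (p : G) * ψ ((p : G)⁻¹ * (x : G)) ∂μP := by
  have hφ : ∀ (g : G) (k : K), φ (g * k) = φ g := fun g k => by
    simpa using hφK 1 k g
  have hψ : ∀ (k : K) (g : G), ψ (k * g) = ψ g := fun k g => by
    simpa using hψK k 1 g
  refine integral_eq_integral_subgroup_of_mul_right_invariant (hIw _ ?_ hφs.mul_right)
    (convolution_integrand_mul_right_eq hφ hψ x)
  exact hφc.mul (hψc.comp (continuous_inv.mul continuous_const))

theorem restriction_convolution
    {G : Type*} [Group G] [TopologicalSpace G] [IsTopologicalGroup G]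
    [LocallyCompactSpace G] [SecondCountableTopology G] [T2Space G]
    [MeasurableSpace G] [BorelSpace G]
    (μG : Measure G) [μG.IsHaarMeasure]
    -- `K` a compact open subgroup with Haar probability measure `μK`:
    (K : Subgroup G) (hKopen : IsOpen (K : Set G)) (hKcpt : IsCompact (K : Set G))
    (μK : Measure K) [IsProbabilityMeasure μK] [μK.IsHaarMeasure]
    -- `P` a closed subgroup with left Haar measure `μP`:
    (P : Subgroup G) (hPcl : IsClosed (P : Set G))
    (μP : Measure P) [μP.IsHaarMeasure]
    -- the Iwasawa integration formula `∫_G F = ∫_P ∫_K F(p·k)`: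
    (hIw : ∀ F : G → ℂ, Continuous F → HasCompactSupport F →
      ∫ g : G, F g ∂μG = ∫ p : P, (∫ k : K, F ((p : G) * (k : G)) ∂μK) ∂μP)
    -- compactly supported continuous `K`-bi-invariant functions:
    (φ ψ : G → ℂ)
    (hφc : Continuous φ) (hφs : HasCompactSupport φ)
    (hψc : Continuous ψ) (hψs : HasCompactSupport ψ)
    (hφK : ∀ (k k' : K) (g : G), φ ((k : G) * g * (k' : G)) = φ g)
    (hψK : ∀ (k k' : K) (g : G), ψ ((k : G) * g * (k' : G)) = ψ g)
    -- the identity, for every `x ∈ P`: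
    (x : P) :
    ∫ g : G, φ g * ψ (g⁻¹ * (x : G)) ∂μG
      = ∫ p : P, φ (p : G) * ψ ((p : G)⁻¹ * (x : G)) ∂μP :=
  restriction_convolution_general μG K μK P μP hIw φ ψ hφc hφs hψc hφK hψK x
end
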